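/- Let p' > p be positive integers and r, s integers with 0 < r < p, 0 < s < p'. If for all nonnegative integers L the polynomial D_{2p',2s}(L+1+r−s, L−r+s; (2p'−1−3r+p)/2, (3r+1)/2) with parameters possibly rational but with all of αK, βK, αi, βi integral has nonnegative coefficients, then for all L the polynomial D_{4p',4s}(L+1+2r−2s, L−1−2r+2s; (10p'−5−11r+p)/4, (11r+5)/4) has nonnegative coefficients. -/

import Mathlib

open LaurentPolynomial Finset

noncomputable section

/-- The Gaussian binomial coefficient `[m choose n]_q` as a polynomial in `q`,
defined via the `q`-Pascal recurrence; it equals `(q;q)_m/((q;q)_n (q;q)_{m-n})`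
for `0 ≤ n ≤ m`. -/
def gb : ℕ → ℕ → Polynomial ℤ
  | _, 0 => 1
  | 0, _ + 1 => 0
  | m + 1, n + 1 => gb m n + Polynomial.X ^ (n + 1) * gb m (n + 1)

/-- `[m choose n]_q` with integer indices, zero unless `0 ≤ n ≤ m`,
viewed as a Laurent polynomial in `q`. -/
def qbin (m n : ℤ) : LaurentPolynomial ℤ :=
  if 0 ≤ n ∧ n ≤ m then (gb m.toNat n.toNat).toLaurent else 0

/-- A Laurent polynomial is a polynomial in `q` with nonnegative coefficients. -/
def IsNonneg (x : LaurentPolynomial ℤ) : Prop :=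
  ∃ P : Polynomial ℤ, (∀ n, 0 ≤ P.coeff n) ∧ P.toLaurent = x

/-- The triangular number `T(j) = j(j+1)/2`. -/
def tri (j : ℤ) : ℤ := j * (j + 1) / 2

/-- The hook-difference generating function `D_{K,i}(N,M;α,β)` of Andrews et al.,
parametrized by the integers `aK = αK`, `bK = βK`, `ai = αi`, `bi = βi`
(so that rational `α, β` with these products integral are allowed):
`D = ∑_{j ∈ ℤ} ( q^{j((α+β)Kj + Kβ - (α+β)i)} [M+N choose M-Kj]_q
               - q^{((α+β)j+β)(Kj+i)} [M+N choose M-Kj-i]_q )`. -/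
def D (K i N M aK bK ai bi : ℤ) : LaurentPolynomial ℤ :=
  ∑ᶠ j : ℤ,
    (T (j * ((aK + bK) * j + bK - (ai + bi))) * qbin (M + N) (M - K * j) -
      T ((aK + bK) * j ^ 2 + (bK + ai + bi) * j + bi) * qbin (M + N) (M - K * j - i))


/-!
Write `d = r - s`. The trinomial revision `[a,b][b,c] = [a,c][a-c,b-c]` and the `q`-Vandermonde
convolution, each used twice, evaluate
`∑_k O_{L,k}(q) [2k+1 choose k-a]_q = q^{2a(a+1)} [2L choose L-2a-1]_q`.
Applied to the summands of `D_{2p',2s}(k+1+d, k-d; …)`, whose binomials are `[2k+1 choose k-a]_q`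
with `a = d + 2p'j` and `a = d + 2p'j + 2s`, it turns `∑_k O_{L,k} D_{2p',2s}(k+1+d, k-d; …)` into
`q^{2d(d+1)} D_{4p',4s}(L+1+2d, L-1-2d; …)`. The left side has nonnegative coefficients; since
`11r + 5 < 10p' + p` and `0 < s < p'`, every exponent in `D_{4p',4s}` is nonnegative, so it is a
polynomial and the factor `q^{2d(d+1)}` can be cancelled without losing positivity.
-/

lemma gb_zero (m : ℕ) : gb m 0 = 1 := by cases m <;> rfl

lemma gb_succ_succ (m n : ℕ) :
    gb (m + 1) (n + 1) = gb m n + Polynomial.X ^ (n + 1) * gb m (n + 1) := rfl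

lemma gb_eq_zero_of_lt : ∀ {m n : ℕ}, m < n → gb m n = 0
  | 0, _ + 1, _ => rfl
  | m + 1, n + 1, h => by
      rw [gb_succ_succ, gb_eq_zero_of_lt (by omega), gb_eq_zero_of_lt (by omega), mul_zero,
        add_zero]

lemma gb_self : ∀ m : ℕ, gb m m = 1
  | 0 => rfl
  | m + 1 => by rw [gb_succ_succ, gb_self m, gb_eq_zero_of_lt (by omega), mul_zero, add_zero]

lemma gb_coeff_nonneg : ∀ m n i : ℕ, 0 ≤ (gb m n).coeff i
  | m, 0, i => by rw [gb_zero, Polynomial.coeff_one]; split_ifs <;> norm_num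
  | 0, n + 1, i => by simp [gb]
  | m + 1, n + 1, i => by
      rw [gb_succ_succ, Polynomial.coeff_add, Polynomial.coeff_X_pow_mul']
      have := gb_coeff_nonneg m n i
      split_ifs
      · exact add_nonneg this (gb_coeff_nonneg m (n + 1) _)
      · simpa using this

def qint (k : ℕ) : Polynomial ℤ := ∑ i ∈ range k, Polynomial.X ^ i

def qfact : ℕ → Polynomial ℤ
  | 0 => 1
  | n + 1 => qfact n * qint (n + 1)

lemma qint_add (a b : ℕ) : qint (a + b) = qint a + Polynomial.X ^ a * qint b := by
  simp [qint, Finset.sum_range_add, Finset.mul_sum, pow_add]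

lemma qint_ne_zero {k : ℕ} (hk : 0 < k) : qint k ≠ 0 := fun h => by
  have := congrArg (Polynomial.eval 1) h
  simp [qint] at this
  omega

lemma qfact_ne_zero : ∀ n : ℕ, qfact n ≠ 0
  | 0 => one_ne_zero
  | n + 1 => mul_ne_zero (qfact_ne_zero n) (qint_ne_zero n.succ_pos)

lemma gb_mul_qfact_mul_qfact : ∀ {m n : ℕ}, n ≤ m → gb m n * (qfact n * qfact (m - n)) = qfact m
  | _, 0, _ => by simp [gb_zero, qfact]
  | 0, _ + 1, h => absurd h (by omega)
  | m + 1, n + 1, h => by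
      rcases h.eq_or_lt with h | h
      · obtain rfl : n = m := by omega
        rw [gb_self, Nat.sub_self, qfact, one_mul, mul_one]
      obtain ⟨d, rfl⟩ : ∃ d, m = n + 1 + d := ⟨m - (n + 1), by omega⟩
      have h₁ := gb_mul_qfact_mul_qfact (m := n + 1 + d) (n := n) (by omega)
      have h₂ := gb_mul_qfact_mul_qfact (m := n + 1 + d) (n := n + 1) (by omega)
      rw [show n + 1 + d - n = d + 1 by omega] at h₁
      rw [show n + 1 + d - (n + 1) = d by omega] at h₂
      rw [show n + 1 + d + 1 - (n + 1) = d + 1 by omega, gb_succ_succ]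
      simp only [qfact] at h₁ h₂ ⊢
      rw [show n + 1 + d + 1 = (n + 1) + (d + 1) by omega, qint_add (n + 1) (d + 1)]
      linear_combination qint (n + 1) * h₁ + Polynomial.X ^ (n + 1) * qint (d + 1) * h₂

lemma gb_symm {m n : ℕ} (h : n ≤ m) : gb m n = gb m (m - n) := by
  have h₁ := gb_mul_qfact_mul_qfact h
  have h₂ := gb_mul_qfact_mul_qfact (Nat.sub_le m n)
  rw [Nat.sub_sub_self h, mul_comm (qfact (m - n))] at h₂
  exact mul_right_cancel₀ (mul_ne_zero (qfact_ne_zero n) (qfact_ne_zero (m - n))) (h₁.trans h₂.symm)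

lemma gb_mul_gb {a b c : ℕ} (hcb : c ≤ b) (hba : b ≤ a) :
    gb a b * gb b c = gb a c * gb (a - c) (b - c) := by
  have hne : qfact c * qfact (b - c) * qfact (a - b) ≠ 0 :=
    mul_ne_zero (mul_ne_zero (qfact_ne_zero c) (qfact_ne_zero _)) (qfact_ne_zero _)
  refine mul_right_cancel₀ hne ?_
  have hab := gb_mul_qfact_mul_qfact hba
  have hbc := gb_mul_qfact_mul_qfact hcb
  have hac := gb_mul_qfact_mul_qfact (hcb.trans hba)
  have hd := gb_mul_qfact_mul_qfact (show b - c ≤ a - c by omega)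
  rw [show a - c - (b - c) = a - b by omega] at hd
  linear_combination gb a b * qfact (a - b) * hbc + hab - gb a c * qfact c * hd - hac

lemma qbin_eq_zero {m n : ℤ} (h : n < 0 ∨ m < n) : qbin m n = 0 :=
  if_neg (by omega)

lemma qbin_eq {m n : ℤ} (h₀ : 0 ≤ n) (h₁ : n ≤ m) :
    qbin m n = (gb m.toNat n.toNat).toLaurent := if_pos ⟨h₀, h₁⟩

lemma qbin_zero {m : ℤ} (hm : 0 ≤ m) : qbin m 0 = 1 := by
  rw [qbin_eq le_rfl hm, Int.toNat_zero, gb_zero, Polynomial.toLaurent_one]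

lemma qbin_self {m : ℤ} (hm : 0 ≤ m) : qbin m m = 1 := by
  rw [qbin_eq hm le_rfl, gb_self, Polynomial.toLaurent_one]

lemma qbin_zero_left (n : ℤ) : qbin 0 n = if n = 0 then 1 else 0 := by
  split_ifs with h
  · rw [h, qbin_zero le_rfl]
  · exact qbin_eq_zero (by omega)

lemma qbin_symm {m : ℤ} (hm : 0 ≤ m) (n : ℤ) : qbin m n = qbin m (m - n) := by
  by_cases h : 0 ≤ n ∧ n ≤ m
  · rw [qbin_eq h.1 h.2, qbin_eq (by omega) (by omega),
      show (m - n).toNat = m.toNat - n.toNat by omega, ← gb_symm (by omega)]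
  · rw [qbin_eq_zero (by omega), qbin_eq_zero (by omega)]

lemma qbin_mul_qbin {a : ℤ} (ha : 0 ≤ a) (b c : ℤ) :
    qbin a b * qbin b c = qbin a c * qbin (a - c) (b - c) := by
  by_cases h : 0 ≤ c ∧ c ≤ b ∧ b ≤ a
  · obtain ⟨h₀, h₁, h₂⟩ := h
    rw [qbin_eq (by omega) h₂, qbin_eq h₀ h₁, qbin_eq h₀ (by omega), qbin_eq (by omega) (by omega),
      ← map_mul, ← map_mul, show (a - c).toNat = a.toNat - c.toNat by omega,
      show (b - c).toNat = b.toNat - c.toNat by omega, gb_mul_gb (by omega) (by omega)]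
  · have hL : qbin a b * qbin b c = 0 := by
      rcases (by omega : c < 0 ∨ b < c ∨ a < b) with h' | h' | h'
      · rw [qbin_eq_zero (Or.inl h'), mul_zero]
      · rw [qbin_eq_zero (Or.inr h'), mul_zero]
      · rw [qbin_eq_zero (Or.inr h'), zero_mul]
    rw [hL]
    by_cases h₁ : 0 ≤ c ∧ c ≤ a
    · rw [qbin_eq_zero (show b - c < 0 ∨ a - c < b - c by omega), mul_zero]
    · rw [qbin_eq_zero (by omega), zero_mul]

lemma qbin_succ {m : ℤ} (hm : 0 ≤ m) (n : ℤ) :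
    qbin (m + 1) n = qbin m (n - 1) + T n * qbin m n := by
  rcases (by omega : n < 0 ∨ n = 0 ∨ (0 < n ∧ n ≤ m) ∨ n = m + 1 ∨ m + 1 < n) with
    h | rfl | h | rfl | h
  · rw [qbin_eq_zero (Or.inl h), qbin_eq_zero (Or.inl (by omega)), qbin_eq_zero (Or.inl h)]
    simp
  · rw [qbin_zero (by omega), qbin_zero hm, qbin_eq_zero (Or.inl (by omega)), T_zero, one_mul,
      zero_add]
  · rw [qbin_eq (by omega) (by omega), qbin_eq (by omega) (by omega), qbin_eq h.1.le h.2,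
      show (m + 1).toNat = m.toNat + 1 by omega, show n.toNat = (n - 1).toNat + 1 by omega,
      gb_succ_succ, map_add, map_mul, Polynomial.toLaurent_X_pow,
      show (((n - 1).toNat + 1 : ℕ) : ℤ) = n by omega]
  · rw [qbin_self (by omega), qbin_eq_zero (m := m) (n := m + 1) (Or.inr (by omega)), mul_zero,
      add_zero, add_sub_cancel_right, qbin_self hm]
  · rw [qbin_eq_zero (Or.inr h), qbin_eq_zero (Or.inr (by omega)),
      qbin_eq_zero (Or.inr (by omega))]
    simp

lemma qbin_succ' {m : ℤ} (hm : 0 ≤ m) (n : ℤ) :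
    qbin (m + 1) n = T (m + 1 - n) * qbin m (n - 1) + qbin m n := by
  rw [qbin_symm (by omega), qbin_succ hm, show m + 1 - n - 1 = m - n by ring, ← qbin_symm hm,
    qbin_symm hm (n - 1), show m - (n - 1) = m + 1 - n by ring, add_comm]

lemma sum_Icc_eq_sum_Icc_of_eq_zero {M : Type*} [AddCommMonoid M] {f : ℤ → M} {a b c d : ℤ}
    (h₁ : ∀ x ∈ Icc a b, x ∉ Icc c d → f x = 0) (h₂ : ∀ x ∈ Icc c d, x ∉ Icc a b → f x = 0) :
    ∑ x ∈ Icc a b, f x = ∑ x ∈ Icc c d, f x := by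
  rw [← sum_subset inter_subset_left fun x hx hx' => h₁ x hx fun h => hx' (mem_inter.2 ⟨hx, h⟩),
    ← sum_subset inter_subset_right fun x hx hx' => h₂ x hx fun h => hx' (mem_inter.2 ⟨h, hx⟩)]

lemma sum_Icc_add_right {M : Type*} [AddCommMonoid M] (f : ℤ → M) (a b t : ℤ) :
    ∑ x ∈ Icc (a + t) (b + t), f x = ∑ x ∈ Icc a b, f (x + t) := by
  rw [← map_add_right_Icc, sum_map]
  rfl

lemma sum_Icc_reflect {M : Type*} [AddCommMonoid M] (f : ℤ → M) (L : ℤ) :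
    ∑ x ∈ Icc 0 L, f x = ∑ x ∈ Icc 0 L, f (L - x) := by
  apply sum_nbij' (L - ·) (L - ·) <;> simp +contextual [mem_Icc]

lemma qbin_vandermonde {m : ℤ} (hm : 0 ≤ m) {n : ℤ} (hn : 0 ≤ n) (c : ℤ) :
    ∑ v ∈ Icc 0 m, T ((m - v) * (c - v)) * (qbin m v * qbin n (c - v)) = qbin (m + n) c := by
  induction n, hn using Int.leInduction generalizing c with
  | base =>
    simp_rw [qbin_zero_left, sub_eq_zero, mul_ite, mul_one, mul_zero, add_zero]
    rw [sum_ite_eq (Icc 0 m) c]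
    split_ifs with hc
    · rw [sub_self, mul_zero, T_zero, one_mul]
    · rw [qbin_eq_zero (by rw [mem_Icc] at hc; omega)]
  | succ n hn ih =>
    have step : ∀ v ∈ Icc 0 m, T ((m - v) * (c - v)) * (qbin m v * qbin (n + 1) (c - v)) =
        T (m + n + 1 - c) * (T ((m - v) * (c - 1 - v)) * (qbin m v * qbin n (c - 1 - v))) +
          T ((m - v) * (c - v)) * (qbin m v * qbin n (c - v)) := fun v _ => by
      have hT : T ((m - v) * (c - v)) * T (n + 1 - (c - v)) =
          (T (m + n + 1 - c) * T ((m - v) * (c - 1 - v)) : LaurentPolynomial ℤ) := by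
        rw [← T_add, ← T_add]
        ring_nf
      rw [qbin_succ' hn, show c - v - 1 = c - 1 - v by ring]
      linear_combination (qbin m v * qbin n (c - 1 - v)) * hT
    rw [sum_congr rfl step, sum_add_distrib, ← mul_sum, ih, ih, ← add_assoc,
      ← qbin_succ' (by omega)]

/-- The kernel `O_{L,k}(q)`; its exponent is `2T(k) + 2T(m+k)`. -/
def Opoly (L k : ℤ) : LaurentPolynomial ℤ :=
  ∑ m ∈ Icc 0 L, T (k * (k + 1) + (m + k) * (m + k + 1)) * (qbin L m * qbin (L - m) (2 * k + 1))

lemma Opoly_mul_qbin {L : ℤ} (hL : 0 ≤ L) (k a : ℤ) :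
    Opoly L k * qbin (2 * k + 1) (k - a) =
      ∑ m ∈ Icc 0 L, T (k * (k + 1) + (m + k) * (m + k + 1)) *
        (qbin L (m + k - a) * (qbin (m + k - a) m * qbin (L - m - (k - a)) (k + a + 1))) := by
  rw [Opoly, sum_mul]
  refine sum_congr rfl fun m hm => ?_
  rw [mem_Icc] at hm
  have h₁ := qbin_mul_qbin (show 0 ≤ L - m by omega) (2 * k + 1) (k - a)
  have h₂ := qbin_mul_qbin hL (m + k - a) m
  rw [show 2 * k + 1 - (k - a) = k + a + 1 by ring] at h₁
  rw [show m + k - a - m = k - a by ring] at h₂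
  rw [mul_assoc, mul_assoc, h₁, ← mul_assoc (qbin L m), ← h₂]
  ring

/-- Substituting `n = m + k - a` for fixed `m`. -/
lemma sum_Opoly_summand_reindex {L m : ℤ} (hm : m ∈ Icc 0 L) (a : ℤ) :
    ∑ k ∈ Icc 0 L, T (k * (k + 1) + (m + k) * (m + k + 1)) *
        (qbin L (m + k - a) * (qbin (m + k - a) m * qbin (L - m - (k - a)) (k + a + 1))) =
      ∑ n ∈ Icc 0 L, T ((n + a - m) * (n + a - m + 1) + (n + a) * (n + a + 1)) *
        (qbin L n * (qbin n m * qbin (L - n) (n + 2 * a + 1 - m))) := by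
  rw [mem_Icc] at hm
  rw [sum_Icc_eq_sum_Icc_of_eq_zero (c := 0 + (a - m)) (d := L + (a - m)), sum_Icc_add_right]
  · refine sum_congr rfl fun n _ => ?_
    rw [show (n + (a - m)) * (n + (a - m) + 1) + (m + (n + (a - m))) * (m + (n + (a - m)) + 1) =
        (n + a - m) * (n + a - m + 1) + (n + a) * (n + a + 1) by ring,
      show m + (n + (a - m)) - a = n by ring, show L - m - (n + (a - m) - a) = L - n by ring,
      show n + (a - m) + a + 1 = n + 2 * a + 1 - m by ring]
  · intro k hk hk'
    simp only [mem_Icc] at hk hk'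
    rw [qbin_eq_zero (m := L) (n := m + k - a) (by omega), zero_mul, mul_zero]
  · intro k hk hk'
    simp only [mem_Icc] at hk hk'
    rcases (by omega : k < a ∨ (L < k ∨ k + a + 1 < 0)) with h | h
    · rw [qbin_eq_zero (m := m + k - a) (n := m) (by omega), zero_mul, mul_zero, mul_zero]
    · rw [qbin_eq_zero (m := L - m - (k - a)) (n := k + a + 1) (by omega), mul_zero, mul_zero,
        mul_zero]

lemma sum_Opoly_summand_vandermonde {L n : ℤ} (hn : n ∈ Icc 0 L) (a : ℤ) :
    ∑ m ∈ Icc 0 L, T ((n + a - m) * (n + a - m + 1) + (n + a) * (n + a + 1)) *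
        (qbin L n * (qbin n m * qbin (L - n) (n + 2 * a + 1 - m))) =
      T ((n + a) * (n + a + 1) + a * (a + 1)) * qbin L n * qbin L (n + 2 * a + 1) := by
  rw [mem_Icc] at hn
  have hV := qbin_vandermonde hn.1 (show 0 ≤ L - n by omega) (n + 2 * a + 1)
  rw [add_sub_cancel] at hV
  rw [sum_Icc_eq_sum_Icc_of_eq_zero (c := 0) (d := n)
      (fun m _ hm => by
        rw [mem_Icc] at hm
        rw [qbin_eq_zero (m := n) (n := m) (by omega), zero_mul, mul_zero, mul_zero])
      (fun m hm hm' => by simp only [mem_Icc] at hm hm'; omega),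
    ← hV, mul_sum]
  refine sum_congr rfl fun m _ => ?_
  rw [show (n + a - m) * (n + a - m + 1) + (n + a) * (n + a + 1) =
      ((n + a) * (n + a + 1) + a * (a + 1)) + (n - m) * (n + 2 * a + 1 - m) by ring, T_add]
  ring

lemma sum_Opoly_mul_qbin {L : ℤ} (hL : 0 ≤ L) (a : ℤ) :
    ∑ k ∈ Icc 0 L, Opoly L k * qbin (2 * k + 1) (k - a) =
      T (2 * (a * (a + 1))) * qbin (2 * L) (L - 2 * a - 1) := by
  simp_rw [Opoly_mul_qbin hL]
  rw [sum_comm, sum_congr rfl fun m hm => sum_Opoly_summand_reindex hm a, sum_comm,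
    sum_congr rfl fun n hn => sum_Opoly_summand_vandermonde hn a, sum_Icc_reflect,
    qbin_symm (show 0 ≤ 2 * L by omega), show 2 * L - (L - 2 * a - 1) = L + 2 * a + 1 by ring,
    show 2 * L = L + L by ring, ← qbin_vandermonde hL hL, mul_sum]
  refine sum_congr rfl fun v _ => ?_
  rw [← qbin_symm hL, show L - v + 2 * a + 1 = L + 2 * a + 1 - v by ring,
    show (L - v + a) * (L - v + a + 1) + a * (a + 1) =
      2 * (a * (a + 1)) + (L - v) * (L + 2 * a + 1 - v) by ring, T_add]
  ring

lemma sum_Opoly_mul_sub {L : ℤ} (hL : 0 ≤ L) (e₁ a₁ e₂ a₂ : ℤ) :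
    ∑ k ∈ Icc 0 L, Opoly L k *
        (T e₁ * qbin (2 * k + 1) (k - a₁) - T e₂ * qbin (2 * k + 1) (k - a₂)) =
      T (e₁ + 2 * (a₁ * (a₁ + 1))) * qbin (2 * L) (L - 2 * a₁ - 1) -
        T (e₂ + 2 * (a₂ * (a₂ + 1))) * qbin (2 * L) (L - 2 * a₂ - 1) := by
  simp_rw [mul_sub, mul_left_comm (Opoly L _)]
  rw [sum_sub_distrib, ← mul_sum, ← mul_sum, sum_Opoly_mul_qbin hL, sum_Opoly_mul_qbin hL, T_add,
    T_add]
  ring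

def Dterm (K i N M aK bK ai bi j : ℤ) : LaurentPolynomial ℤ :=
  T (j * ((aK + bK) * j + bK - (ai + bi))) * qbin (M + N) (M - K * j) -
    T ((aK + bK) * j ^ 2 + (bK + ai + bi) * j + bi) * qbin (M + N) (M - K * j - i)

lemma D_eq_finsum_Dterm (K i N M aK bK ai bi : ℤ) :
    D K i N M aK bK ai bi = ∑ᶠ j, Dterm K i N M aK bK ai bi j := rfl

lemma finite_setOf_qbin_sub_mul_ne_zero {K : ℤ} (hK : K ≠ 0) (m c : ℤ) :
    {j : ℤ | qbin m (c - K * j) ≠ 0}.Finite := by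
  refine ((Set.finite_Icc 0 m).preimage (f := fun j => c - K * j)
    fun x _ y _ h => mul_left_cancel₀ hK (by simpa using h)).subset fun j hj => ?_
  by_contra h
  exact hj (qbin_eq_zero (by simp only [Set.mem_preimage, Set.mem_Icc] at h; omega))

lemma hasFiniteSupport_Dterm {K : ℤ} (hK : K ≠ 0) (i N M aK bK ai bi : ℤ) :
    Function.HasFiniteSupport (Dterm K i N M aK bK ai bi) := by
  refine ((finite_setOf_qbin_sub_mul_ne_zero hK (M + N) M).union
    (finite_setOf_qbin_sub_mul_ne_zero hK (M + N) (M - i))).subset fun j hj => ?_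
  by_contra h
  simp only [Set.mem_union, Set.mem_ofPred_eq, not_or, not_not, sub_right_comm M i] at h
  exact hj (by rw [Dterm, h.1, h.2, mul_zero, mul_zero, sub_zero])

lemma T_mul_Dterm_double {K i d L aK bK ai bi aK' bK' ai' bi' : ℤ} (hL : 0 ≤ L)
    (hα : aK' + bK' = aK + bK + 2 * K ^ 2)
    (hβ₁ : bK' - (ai' + bi') = bK - (ai + bi) + 2 * K * (2 * d + 1))
    (hβ₂ : bK' + ai' + bi' = bK + ai + bi + 2 * K * (2 * d + 2 * i + 1))
    (hγ : bi' = bi + 2 * i * (2 * d + i + 1)) (j : ℤ) :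
    T (2 * (d * (d + 1))) *
        Dterm (2 * K) (2 * i) (L + 1 + 2 * d) (L - 1 - 2 * d) aK' bK' ai' bi' j =
      ∑ k ∈ Icc 0 L, Opoly L k * Dterm K i (k + 1 + d) (k - d) aK bK ai bi j := by
  have hsmall : ∀ k, Dterm K i (k + 1 + d) (k - d) aK bK ai bi j =
      T (j * ((aK + bK) * j + bK - (ai + bi))) * qbin (2 * k + 1) (k - (d + K * j)) -
        T ((aK + bK) * j ^ 2 + (bK + ai + bi) * j + bi) *
          qbin (2 * k + 1) (k - (d + K * j + i)) := fun k => by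
    rw [Dterm]
    congr 3 <;> ring
  have he₁ : 2 * (d * (d + 1)) + j * ((aK' + bK') * j + bK' - (ai' + bi')) =
      j * ((aK + bK) * j + bK - (ai + bi)) + 2 * ((d + K * j) * (d + K * j + 1)) := by
    linear_combination j ^ 2 * hα + j * hβ₁
  have he₂ : 2 * (d * (d + 1)) + ((aK' + bK') * j ^ 2 + (bK' + ai' + bi') * j + bi') =
      (aK + bK) * j ^ 2 + (bK + ai + bi) * j + bi +
        2 * ((d + K * j + i) * (d + K * j + i + 1)) := by
    linear_combination j ^ 2 * hα + j * hβ₂ + hγ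
  simp_rw [hsmall]
  rw [sum_Opoly_mul_sub hL, Dterm, mul_sub, ← mul_assoc (T _), ← mul_assoc (T _), ← T_add,
    ← T_add, he₁, he₂]
  congr 3 <;> ring

/-- The exponents of `D` depend only on `αK + βK`, `βK ∓ (αi + βi)` and `βi`; the hypotheses make
those of `D_{2K,2i}` absorb the factors `q^{2a(a+1)}` of `sum_Opoly_mul_qbin` at `a = d + Kj` and
`a = d + Kj + i`. -/
lemma T_mul_D_double {K i d L aK bK ai bi aK' bK' ai' bi' : ℤ} (hK : K ≠ 0) (hL : 0 ≤ L)
    (hα : aK' + bK' = aK + bK + 2 * K ^ 2)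
    (hβ₁ : bK' - (ai' + bi') = bK - (ai + bi) + 2 * K * (2 * d + 1))
    (hβ₂ : bK' + ai' + bi' = bK + ai + bi + 2 * K * (2 * d + 2 * i + 1))
    (hγ : bi' = bi + 2 * i * (2 * d + i + 1)) :
    T (2 * (d * (d + 1))) * D (2 * K) (2 * i) (L + 1 + 2 * d) (L - 1 - 2 * d) aK' bK' ai' bi' =
      ∑ k ∈ Icc 0 L, Opoly L k * D K i (k + 1 + d) (k - d) aK bK ai bi := by
  simp_rw [D_eq_finsum_Dterm, mul_finsum]
  rw [sum_finsum_comm _ _ fun k _ =>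
    (hasFiniteSupport_Dterm hK ..).subset (Function.support_mul_subset_right _ _)]
  exact finsum_congr (T_mul_Dterm_double hL hα hβ₁ hβ₂ hγ)

lemma isNonneg_zero : IsNonneg 0 := ⟨0, fun _ => le_rfl, map_zero _⟩

lemma IsNonneg.add {x y : LaurentPolynomial ℤ} (hx : IsNonneg x) (hy : IsNonneg y) :
    IsNonneg (x + y) := by
  obtain ⟨P, hP, rfl⟩ := hx
  obtain ⟨Q, hQ, rfl⟩ := hy
  exact ⟨P + Q, fun n => by simpa using add_nonneg (hP n) (hQ n), map_add _ _ _⟩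

lemma IsNonneg.mul {x y : LaurentPolynomial ℤ} (hx : IsNonneg x) (hy : IsNonneg y) :
    IsNonneg (x * y) := by
  obtain ⟨P, hP, rfl⟩ := hx
  obtain ⟨Q, hQ, rfl⟩ := hy
  refine ⟨P * Q, fun n => ?_, map_mul _ _ _⟩
  rw [Polynomial.coeff_mul]
  exact sum_nonneg fun x _ => mul_nonneg (hP x.1) (hQ x.2)

lemma isNonneg_sum {ι : Type*} (s : Finset ι) (f : ι → LaurentPolynomial ℤ)
    (h : ∀ i ∈ s, IsNonneg (f i)) : IsNonneg (∑ i ∈ s, f i) :=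
  sum_induction f IsNonneg (fun _ _ => IsNonneg.add) isNonneg_zero h

lemma isNonneg_T {n : ℤ} (hn : 0 ≤ n) : IsNonneg (T n) := by
  lift n to ℕ using hn
  exact ⟨Polynomial.X ^ n, fun m => by rw [Polynomial.coeff_X_pow]; split_ifs <;> norm_num,
    Polynomial.toLaurent_X_pow n⟩

lemma isNonneg_qbin (m n : ℤ) : IsNonneg (qbin m n) := by
  unfold qbin
  split_ifs
  · exact ⟨_, gb_coeff_nonneg _ _, rfl⟩
  · exact isNonneg_zero

lemma mul_mul_add_nonneg {x y : ℤ} (h : |y| ≤ x) (j : ℤ) : 0 ≤ j * (x * j + y) := by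
  obtain ⟨h₁, h₂⟩ := abs_le.1 h
  rcases (by omega : j ≤ -1 ∨ j = 0 ∨ 1 ≤ j) with hj | rfl | hj
  · exact mul_nonneg_of_nonpos_of_nonpos (by omega) (by nlinarith)
  · rw [zero_mul]
  · exact mul_nonneg (by omega) (by nlinarith)

lemma add_mul_add_nonneg {x y u v : ℤ} (hy : 0 ≤ y) (hyx : y ≤ x) (hv : 0 ≤ v) (hvu : v ≤ u)
    (j : ℤ) : 0 ≤ (x * j + y) * (u * j + v) := by
  rcases le_or_gt 0 j with hj | hj
  · exact mul_nonneg (by nlinarith) (by nlinarith)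
  · exact mul_nonneg_of_nonpos_of_nonpos (by nlinarith) (by nlinarith)

lemma Int.mul_add_one_nonneg (k : ℤ) : 0 ≤ k * (k + 1) := by
  simpa using mul_mul_add_nonneg (x := 1) (y := 1) le_rfl k

lemma isNonneg_Opoly (L k : ℤ) : IsNonneg (Opoly L k) :=
  isNonneg_sum _ _ fun m _ =>
    (isNonneg_T (add_nonneg (Int.mul_add_one_nonneg k) (Int.mul_add_one_nonneg (m + k)))).mul
      ((isNonneg_qbin _ _).mul (isNonneg_qbin _ _))

lemma T_mem_range {n : ℤ} (hn : 0 ≤ n) : T n ∈ (Polynomial.toLaurent (R := ℤ)).range := by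
  lift n to ℕ using hn
  exact ⟨_, Polynomial.toLaurent_X_pow n⟩

lemma qbin_mem_range (m n : ℤ) : qbin m n ∈ (Polynomial.toLaurent (R := ℤ)).range := by
  unfold qbin
  split_ifs
  · exact ⟨_, rfl⟩
  · exact zero_mem _

lemma D_mem_range {K i N M aK bK ai bi : ℤ}
    (h₁ : ∀ j, 0 ≤ j * ((aK + bK) * j + bK - (ai + bi)))
    (h₂ : ∀ j, 0 ≤ (aK + bK) * j ^ 2 + (bK + ai + bi) * j + bi) :
    D K i N M aK bK ai bi ∈ (Polynomial.toLaurent (R := ℤ)).range :=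
  finsum_induction _ (zero_mem _) (fun _ _ => add_mem) fun j =>
    sub_mem (mul_mem (T_mem_range (h₁ j)) (qbin_mem_range _ _))
      (mul_mem (T_mem_range (h₂ j)) (qbin_mem_range _ _))

/-- The exponents factor as `j * (P(10P + p) j + P(11r + 5) - s(10P + p))` and
`((10P + p) j + 11r + 5) * (Pj + s)`. -/
lemma D_mem_range_of_lt {P p r s : ℤ} (hpP : p < P) (hr0 : 0 ≤ r) (hrp : r < p) (hs0 : 0 ≤ s)
    (hsP : s ≤ P) (K i N M : ℤ) :
    D K i N M (P * (10 * P - 5 - 11 * r + p)) (P * (11 * r + 5))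
      (s * (10 * P - 5 - 11 * r + p)) (s * (11 * r + 5)) ∈
        (Polynomial.toLaurent (R := ℤ)).range := by
  have h₁₁ : 11 * r + 5 ≤ 10 * P + p := by omega
  refine D_mem_range (fun j => ?_) (fun j => ?_)
  · have hy : |P * (11 * r + 5) - s * (10 * P + p)| ≤ P * (10 * P + p) :=
      abs_le.2 ⟨by nlinarith, by nlinarith⟩
    exact (mul_mul_add_nonneg hy j).trans_eq (by ring)
  · exact (add_mul_add_nonneg (by omega) h₁₁ hs0 hsP j).trans_eq (by ring)

lemma IsNonneg.of_T_mul {x : LaurentPolynomial ℤ} {c : ℤ} (hc : 0 ≤ c)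
    (hx : x ∈ (Polynomial.toLaurent (R := ℤ)).range) (h : IsNonneg (T c * x)) : IsNonneg x := by
  obtain ⟨Q, rfl⟩ := hx
  obtain ⟨P, hP, hPQ⟩ := h
  lift c to ℕ using hc
  rw [← Polynomial.toLaurent_X_pow, ← map_mul, Polynomial.toLaurent_inj] at hPQ
  exact ⟨Q, fun n => by simpa [hPQ, Polynomial.coeff_X_pow_mul] using hP (n + c), rfl⟩

theorem doubling_step_general (p p' : ℕ) (hpp' : p < p')
    (r s : ℤ) (hr0 : 0 < r) (hrp : r < p) (hs0 : 0 < s) (hsp' : s < p')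
    (hyp : ∀ L : ℕ, IsNonneg (D (2 * p') (2 * s) ((L : ℤ) + 1 + r - s) ((L : ℤ) - r + s)
      ((p' : ℤ) * (2 * p' - 1 - 3 * r + p)) ((p' : ℤ) * (3 * r + 1))
      (s * (2 * p' - 1 - 3 * r + p)) (s * (3 * r + 1)))) :
    ∀ L : ℕ, IsNonneg (D (4 * p') (4 * s) ((L : ℤ) + 1 + 2 * r - 2 * s)
      ((L : ℤ) - 1 - 2 * r + 2 * s)
      ((p' : ℤ) * (10 * p' - 5 - 11 * r + p)) ((p' : ℤ) * (11 * r + 5))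
      (s * (10 * p' - 5 - 11 * r + p)) (s * (11 * r + 5))) := by
  intro L
  have hpp'' : (p : ℤ) < p' := by exact_mod_cast hpp'
  have hdouble := T_mul_D_double (K := 2 * p') (i := 2 * s) (d := r - s) (L := L)
    (aK := p' * (2 * p' - 1 - 3 * r + p)) (bK := p' * (3 * r + 1))
    (ai := s * (2 * p' - 1 - 3 * r + p)) (bi := s * (3 * r + 1))
    (aK' := p' * (10 * p' - 5 - 11 * r + p)) (bK' := p' * (11 * r + 5))
    (ai' := s * (10 * p' - 5 - 11 * r + p)) (bi' := s * (11 * r + 5))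
    (by omega) (by omega) (by ring) (by ring) (by ring) (by ring)
  have hsmall : ∀ k ∈ Icc (0 : ℤ) L, IsNonneg (D (2 * p') (2 * s) (k + 1 + (r - s)) (k - (r - s))
      (p' * (2 * p' - 1 - 3 * r + p)) (p' * (3 * r + 1))
      (s * (2 * p' - 1 - 3 * r + p)) (s * (3 * r + 1))) := fun k hk => by
    lift k to ℕ using (mem_Icc.1 hk).1
    convert hyp k using 3 <;> ring
  refine IsNonneg.of_T_mul (mul_nonneg zero_le_two (Int.mul_add_one_nonneg (r - s)))
    (D_mem_range_of_lt hpp'' hr0.le hrp hs0.le hsp'.le ..) ?_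
  rw [show (4 : ℤ) * p' = 2 * (2 * p') by ring, show 4 * s = 2 * (2 * s) by ring,
    show (L : ℤ) + 1 + 2 * r - 2 * s = L + 1 + 2 * (r - s) by ring,
    show (L : ℤ) - 1 - 2 * r + 2 * s = L - 1 - 2 * (r - s) by ring, hdouble]
  exact isNonneg_sum _ _ fun k hk => (isNonneg_Opoly L k).mul (hsmall k hk)

/-- If `D_{2p',2s}(L+1+r-s, L-r+s; (2p'-1-3r+p)/2, (3r+1)/2)` has nonnegative
coefficients for all `L ≥ 0`, then so does
`D_{4p',4s}(L+1+2r-2s, L-1-2r+2s; (10p'-5-11r+p)/4, (11r+5)/4)`.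
Here `D` is parametrized by the integers `αK, βK, αi, βi`. -/
theorem doubling_step (p p' : ℕ) (hp : 0 < p) (hpp' : p < p')
    (r s : ℤ) (hr0 : 0 < r) (hrp : r < p) (hs0 : 0 < s) (hsp' : s < p')
    (hyp : ∀ L : ℕ, IsNonneg (D (2 * p') (2 * s) ((L : ℤ) + 1 + r - s) ((L : ℤ) - r + s)
      ((p' : ℤ) * (2 * p' - 1 - 3 * r + p)) ((p' : ℤ) * (3 * r + 1))
      (s * (2 * p' - 1 - 3 * r + p)) (s * (3 * r + 1)))) :
    ∀ L : ℕ, IsNonneg (D (4 * p') (4 * s) ((L : ℤ) + 1 + 2 * r - 2 * s)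
      ((L : ℤ) - 1 - 2 * r + 2 * s)
      ((p' : ℤ) * (10 * p' - 5 - 11 * r + p)) ((p' : ℤ) * (11 * r + 5))
      (s * (10 * p' - 5 - 11 * r + p)) (s * (11 * r + 5))) :=
  doubling_step_general p p' hpp' r s hr0 hrp hs0 hsp' hyp
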